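/- arXiv:2501.03792 — 4 statements merged into one kernel-verified Lean document; each statement's English description precedes it below -/
import Mathlib

section
/- For every natural number n ≥ 1 and every l with 0 ≤ l ≤ n and m = n − l, the inequality 2^(2l)·l^l·(n+m)^(n+m) ≥ (8n/5)^(2n) holds (with the convention 0^0 = 1); consequently each summand 2^(−2l)·n^(2n+1/2)/(l^l·(n+m)^(n+m)) is at most √n·(25/64)^n, so Σ_{l+m=n} 2^(−2l)·n^(2n+1/2)/(l^l·(n+m)^(n+m)) ≤ (n+1)·√n·(25/64)^n. -/
open Finset Real

lemma aux_rpow (s t : ℝ) (hs : 0 ≤ s) (ht : 0 < t) :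
    ((4/5) * (s+t)) ^ (s+t) ≤ (4*s) ^ s * t ^ t := by
  have hst : 0 < s + t := by linarith
  set C : ℝ := (4/5) * (s+t) with hC
  have hCpos : 0 < C := by positivity
  have hw : s/(s+t) + t/(s+t) = 1 := by field_simp
  have hp₁ : (0:ℝ) ≤ C/(4*s) := by positivity
  have hp₂ : (0:ℝ) ≤ C/t := by positivity
  have amgm := Real.geom_mean_le_arith_mean2_weighted
    (div_nonneg hs hst.le) (div_nonneg ht.le hst.le) hp₁ hp₂ hw
  have hrhs : s/(s+t) * (C/(4*s)) + t/(s+t) * (C/t) ≤ 1 := by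
    rcases hs.eq_or_lt with h | h
    · rw [← h]
      norm_num
      rw [div_self ht.ne', one_mul, div_le_one ht, hC, ← h]
      linarith
    · have : s/(s+t) * (C/(4*s)) + t/(s+t) * (C/t) = 1 := by
        field_simp [hC]; ring
      linarith
  have h1 : (C/(4*s)) ^ (s/(s+t)) * (C/t) ^ (t/(s+t)) ≤ 1 := le_trans amgm hrhs
  have h2 : ((C/(4*s)) ^ (s/(s+t)) * (C/t) ^ (t/(s+t))) ^ (s+t) ≤ 1 :=
    Real.rpow_le_one (by positivity) h1 hst.le
  rw [Real.mul_rpow (by positivity) (by positivity),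
      ← Real.rpow_mul hp₁, ← Real.rpow_mul hp₂,
      (by field_simp : s/(s+t)*(s+t) = s), (by field_simp : t/(s+t)*(s+t) = t),
      Real.div_rpow hCpos.le (by positivity), Real.div_rpow hCpos.le ht.le,
      div_mul_div_comm, ← Real.rpow_add hCpos] at h2
  have hds : 0 < (4*s)^s * t^t := by
    rcases hs.eq_or_lt with h | h
    · rw [← h]; simp; positivity
    · have := Real.rpow_pos_of_pos (by linarith : (0:ℝ) < 4*s) s
      have := Real.rpow_pos_of_pos ht t
      positivity
  exact (div_le_one hds).mp h2

lemma key_nat (n l : ℕ) (hn : 1 ≤ n) (hl : l ≤ n) :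
    (8 * (n : ℝ) / 5) ^ (2 * n) ≤
      (2 : ℝ) ^ (2 * l) * (l : ℝ) ^ l * ((n : ℝ) + ((n - l : ℕ) : ℝ)) ^ (n + (n - l)) := by
  have hn1 : (1:ℝ) ≤ (n:ℝ) := by exact_mod_cast hn
  set t : ℝ := (n : ℝ) + ((n - l : ℕ) : ℝ) with hT
  have ht : 0 < t := by
    have : (0:ℝ) ≤ ((n - l : ℕ) : ℝ) := Nat.cast_nonneg _
    rw [hT]; linarith
  have hcast : ((n - l : ℕ) : ℝ) = (n:ℝ) - (l:ℝ) := Nat.cast_sub hl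
  have h := aux_rpow (l : ℝ) t (Nat.cast_nonneg _) ht
  have hsum : (l:ℝ) + t = ((2 * n : ℕ) : ℝ) := by rw [hT, hcast]; push_cast; ring
  have e1 : ((4/5) * ((l:ℝ) + t)) ^ ((l:ℝ) + t) = (8 * (n : ℝ) / 5) ^ (2 * n) := by
    rw [hsum, Real.rpow_natCast]
    congr 1
    push_cast; ring
  have e2 : (4 * (l:ℝ)) ^ ((l:ℝ)) = (2 : ℝ) ^ (2 * l) * (l : ℝ) ^ l := by
    rw [Real.rpow_natCast, mul_pow, pow_mul]
    norm_num
  have e3 : t ^ t = t ^ (n + (n - l)) := by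
    have : t = ((n + (n - l) : ℕ) : ℝ) := by rw [hT]; push_cast; ring
    nth_rewrite 2 [this]
    rw [Real.rpow_natCast]
  rw [e1, e2, e3] at h
  exact h

theorem min_and_sum_bound (n : ℕ) (hn : 1 ≤ n) :
    (∀ l : ℕ, l ≤ n → ∀ m : ℕ, m = n - l →
      (8 * (n : ℝ) / 5) ^ (2 * n) ≤
        (2 : ℝ) ^ (2 * l) * (l : ℝ) ^ l * ((n : ℝ) + (m : ℝ)) ^ (n + m)) ∧
    (∑ l ∈ Finset.range (n + 1),
        (n : ℝ) ^ (2 * (n : ℝ) + 1/2) /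
          ((2 : ℝ) ^ (2 * l) * (l : ℝ) ^ l * ((n : ℝ) + ((n - l : ℕ) : ℝ)) ^ (n + (n - l)))) ≤
      ((n : ℝ) + 1) * Real.sqrt n * (25 / 64 : ℝ) ^ n := by
  have hnpos : (0:ℝ) < (n:ℝ) := by exact_mod_cast hn
  constructor
  · intro l hl m hm
    subst hm
    exact key_nat n l hn hl
  · have hbound : ∀ l ∈ Finset.range (n + 1),
        (n : ℝ) ^ (2 * (n : ℝ) + 1/2) /
          ((2 : ℝ) ^ (2 * l) * (l : ℝ) ^ l * ((n : ℝ) + ((n - l : ℕ) : ℝ)) ^ (n + (n - l))) ≤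
        Real.sqrt n * (25 / 64 : ℝ) ^ n := by
      intro l hl
      have hln : l ≤ n := Nat.lt_succ_iff.mp (Finset.mem_range.mp hl)
      have hD := key_nat n l hn hln
      have hDpos : (0:ℝ) < (8 * (n : ℝ) / 5) ^ (2 * n) := by positivity
      have step1 : (n : ℝ) ^ (2 * (n : ℝ) + 1/2) /
          ((2 : ℝ) ^ (2 * l) * (l : ℝ) ^ l * ((n : ℝ) + ((n - l : ℕ) : ℝ)) ^ (n + (n - l))) ≤
          (n : ℝ) ^ (2 * (n : ℝ) + 1/2) / (8 * (n : ℝ) / 5) ^ (2 * n) :=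
        div_le_div_of_nonneg_left (Real.rpow_nonneg (Nat.cast_nonneg _) _) hDpos hD
      refine step1.trans_eq ?_
      have hnum : (n : ℝ) ^ (2 * (n : ℝ) + 1/2) = (n:ℝ) ^ (2*n) * Real.sqrt n := by
        rw [Real.rpow_add hnpos, Real.sqrt_eq_rpow]
        congr 1
        rw [show (2 * (n:ℝ)) = ((2*n : ℕ) : ℝ) by push_cast; ring, Real.rpow_natCast]
      have hden : (8 * (n : ℝ) / 5) ^ (2 * n) = (64/25:ℝ)^n * (n:ℝ)^(2*n) := by
        rw [pow_mul, pow_mul, ← mul_pow]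
        congr 1
        ring
      rw [hnum, hden]
      have hprod : ((25:ℝ)/64)^n * ((64:ℝ)/25)^n = 1 := by
        rw [← mul_pow]; norm_num
      have h2n : (0:ℝ) < (n:ℝ)^(2*n) := by positivity
      field_simp
      nlinarith [hprod, Real.sqrt_nonneg (n:ℝ), h2n,
        mul_pos (pow_pos (by norm_num : (0:ℝ) < 64/25) n) h2n]
    calc (∑ l ∈ Finset.range (n + 1),
        (n : ℝ) ^ (2 * (n : ℝ) + 1/2) /
          ((2 : ℝ) ^ (2 * l) * (l : ℝ) ^ l * ((n : ℝ) + ((n - l : ℕ) : ℝ)) ^ (n + (n - l))))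
        ≤ (Finset.range (n+1)).card • (Real.sqrt n * (25 / 64 : ℝ) ^ n) :=
          Finset.sum_le_card_nsmul _ _ _ hbound
      _ = ((n : ℝ) + 1) * Real.sqrt n * (25 / 64 : ℝ) ^ n := by
          rw [Finset.card_range, nsmul_eq_mul]
          push_cast; ring
end

section
/- Let a_{l,m} = (2l+4m)! / ((l+m)!·l!·(m!)³). Then for every natural number n, Σ_{l+m=n} a_{l,m}·|λ|^l·|μ|^m ≤ ((4n)!/(n!)^4)·(|λ|+|μ|)^n for all complex numbers λ, μ. -/
/-! The coefficient `aCoeff l m` is at most `(4n)!/(n!)⁴ · C(n, l)` when `l + m = n`, which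
reduces to `(2n + 2m)!/(m!)² ≤ (4n)!/(n!)²` for `m ≤ n`; this holds because raising `m` by one
multiplies the left side by `(2n + 2m + 2)(2n + 2m + 1)/(m + 1)² ≥ 1`. Summing against
`|λ|^l |μ|^m` then gives the binomial expansion of `(|λ| + |μ|)ⁿ`. -/

open Finset

noncomputable def aCoeff (l m : ℕ) : ℝ :=
  ((2 * l + 4 * m).factorial : ℝ) /
    (((l + m).factorial : ℝ) * (l.factorial : ℝ) * ((m.factorial : ℝ)) ^ 3)

theorem Nat.factorial_add_two_mul_mul_sq_le {a m k : ℕ} (hmk : m ≤ k) :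
    (a + 2 * m).factorial * k.factorial ^ 2 ≤ (a + 2 * k).factorial * m.factorial ^ 2 := by
  induction k, hmk using Nat.le_induction with
  | base => rfl
  | succ k _ ih =>
    have hstep : (k + 1) ^ 2 ≤ (a + 2 * k + 2) * (a + 2 * k + 1) := by nlinarith
    have hfac : (a + 2 * (k + 1)).factorial
        = (a + 2 * k + 2) * (a + 2 * k + 1) * (a + 2 * k).factorial := by
      rw [show a + 2 * (k + 1) = a + 2 * k + 1 + 1 by ring, Nat.factorial_succ,
        Nat.factorial_succ, mul_assoc]
    calc (a + 2 * m).factorial * (k + 1).factorial ^ 2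
        = (k + 1) ^ 2 * ((a + 2 * m).factorial * k.factorial ^ 2) := by
          rw [Nat.factorial_succ]; ring
      _ ≤ (a + 2 * k + 2) * (a + 2 * k + 1) * ((a + 2 * k).factorial * m.factorial ^ 2) :=
          Nat.mul_le_mul hstep ih
      _ = (a + 2 * (k + 1)).factorial * m.factorial ^ 2 := by rw [hfac]; ring

theorem aCoeff_le_mul_choose {l m n : ℕ} (hn : l + m = n) :
    aCoeff l m ≤ ((4 * n).factorial : ℝ) / (n.factorial : ℝ) ^ 4 * (n.choose l : ℝ) := by
  have hfac : ((2 * n + 2 * m).factorial : ℝ) * (n.factorial : ℝ) ^ 2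
      ≤ ((4 * n).factorial : ℝ) * (m.factorial : ℝ) ^ 2 := by
    have := Nat.factorial_add_two_mul_mul_sq_le (a := 2 * n) (show m ≤ n by omega)
    rw [show 2 * n + 2 * n = 4 * n by ring] at this
    exact_mod_cast this
  rw [aCoeff, hn, show 2 * l + 4 * m = 2 * n + 2 * m by omega,
    Nat.cast_choose ℝ (show l ≤ n by omega), show n - l = m by omega, div_mul_div_comm,
    div_le_div_iff₀ (by positivity) (by positivity)]
  calc ((2 * n + 2 * m).factorial : ℝ) * ((n.factorial : ℝ) ^ 4 * (l.factorial * m.factorial))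
      = ((2 * n + 2 * m).factorial : ℝ) * (n.factorial : ℝ) ^ 2
          * ((n.factorial : ℝ) ^ 2 * l.factorial * m.factorial) := by ring
    _ ≤ ((4 * n).factorial : ℝ) * (m.factorial : ℝ) ^ 2
          * ((n.factorial : ℝ) ^ 2 * l.factorial * m.factorial) := by gcongr
    _ = ((4 * n).factorial : ℝ) * n.factorial
          * (n.factorial * l.factorial * (m.factorial : ℝ) ^ 3) := by ring

theorem diag_sum_bound (n : ℕ) (lam mu : ℂ) :
    (∑ l ∈ Finset.range (n + 1), aCoeff l (n - l) * ‖lam‖ ^ l * ‖mu‖ ^ (n - l)) ≤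
      ((4 * n).factorial : ℝ) / ((n.factorial : ℝ)) ^ 4 * (‖lam‖ + ‖mu‖) ^ n := by
  rw [add_pow, mul_sum]
  refine sum_le_sum fun l hl => ?_
  have hcoeff := aCoeff_le_mul_choose (Nat.add_sub_of_le (Nat.lt_succ_iff.mp (mem_range.mp hl)))
  calc aCoeff l (n - l) * ‖lam‖ ^ l * ‖mu‖ ^ (n - l)
      ≤ (4 * n).factorial / (n.factorial : ℝ) ^ 4 * n.choose l * ‖lam‖ ^ l * ‖mu‖ ^ (n - l) := by
        gcongr
    _ = _ := by ring
end

section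
/- Let a_{l,m} = (2l+4m)! / ((l+m)!·l!·(m!)³) and suppose complex numbers λ, μ satisfy 256·(|λ|+|μ|) < 1. Then for every natural number N, the tail series Σ_{l+m ≥ N+1} a_{l,m}·λ^l·μ^m converges absolutely and |Σ_{l+m≥N+1} a_{l,m}·λ^l·μ^m| ≤ ((4(N+1))!/((N+1)!)^4)·(|λ|+|μ|)^(N+1) / (1 − 256·(|λ|+|μ|)). -/
open Finset
open scoped Nat

theorem factorial_add_four (n : ℕ) : (n + 4)! = (n + 1) * (n + 2) * (n + 3) * (n + 4) * n ! := by
  simp only [Nat.factorial_succ]; ring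

theorem factorial_add_two (n : ℕ) : (n + 2)! = (n + 1) * (n + 2) * n ! := by
  simp only [Nat.factorial_succ]; ring

theorem factorial_mul_factorial_sq_le (l m : ℕ) :
    (2 * l + 4 * m)! * (l + m)! ^ 2 ≤ (4 * (l + m))! * m ! ^ 2 := by
  induction l with
  | zero => simp
  | succ l ih =>
    set n := l + m
    set k := 2 * l + 4 * m
    have hk : k ≤ 4 * n := by omega
    have step : (k + 1) * (k + 2) * (n + 1) ^ 2 ≤
        (4 * n + 1) * (4 * n + 2) * (4 * n + 3) * (4 * n + 4) :=
      calc (k + 1) * (k + 2) * (n + 1) ^ 2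
          ≤ (4 * n + 1) * (4 * n + 2) * ((4 * n + 3) * (4 * n + 4)) := by gcongr; nlinarith
        _ = _ := by ring
    rw [show 2 * (l + 1) + 4 * m = k + 2 by omega, show l + 1 + m = n + 1 by omega,
      show 4 * (n + 1) = 4 * n + 4 by ring, factorial_add_two, factorial_add_four,
      Nat.factorial_succ]
    calc (k + 1) * (k + 2) * k ! * ((n + 1) * n !) ^ 2
        = ((k + 1) * (k + 2) * (n + 1) ^ 2) * (k ! * n ! ^ 2) := by ring
      _ ≤ ((4 * n + 1) * (4 * n + 2) * (4 * n + 3) * (4 * n + 4)) * ((4 * n)! * m ! ^ 2) :=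
        Nat.mul_le_mul step ih
      _ = _ := by ring

theorem aCoeff_zero_left (n : ℕ) : aCoeff 0 n = ((4 * n)! : ℝ) / (n ! : ℝ) ^ 4 := by
  simp [aCoeff, pow_succ, mul_assoc]

theorem aCoeff_le (l m : ℕ) : aCoeff l m ≤ aCoeff 0 (l + m) * ((l + m).choose l : ℝ) := by
  have hchoose : ((l + m).choose l : ℝ) * l ! * m ! = (l + m)! := by
    have h := Nat.choose_mul_factorial_mul_factorial (Nat.le_add_right l m)
    rw [Nat.add_sub_cancel_left] at h
    exact_mod_cast h
  have hnat : ((2 * l + 4 * m)! : ℝ) * (l + m)! ^ 2 ≤ (4 * (l + m))! * m ! ^ 2 := by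
    exact_mod_cast factorial_mul_factorial_sq_le l m
  rw [aCoeff, aCoeff_zero_left, div_mul_eq_mul_div,
    div_le_div_iff₀ (by positivity) (by positivity)]
  calc ((2 * l + 4 * m)! : ℝ) * ((l + m)! : ℝ) ^ 4
      = (2 * l + 4 * m)! * ((l + m)! : ℝ) ^ 2 * ((l + m)! : ℝ) ^ 2 := by ring
    _ ≤ (4 * (l + m))! * (m ! : ℝ) ^ 2 * ((l + m)! : ℝ) ^ 2 := by gcongr
    _ = _ := by rw [← hchoose]; ring

theorem aCoeff_zero_left_succ_le (n : ℕ) : aCoeff 0 (n + 1) ≤ 256 * aCoeff 0 n := by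
  rw [aCoeff_zero_left, aCoeff_zero_left, ← mul_div_assoc,
    div_le_div_iff₀ (by positivity) (by positivity)]
  have hpoly : ((4 * n + 1) * (4 * n + 2) * (4 * n + 3) * (4 * n + 4) : ℝ) ≤ 256 * (n + 1) ^ 4 :=
    calc ((4 * n + 1) * (4 * n + 2) * (4 * n + 3) * (4 * n + 4) : ℝ)
        ≤ (4 * n + 4) * (4 * n + 4) * (4 * n + 4) * (4 * n + 4) := by gcongr <;> linarith
      _ = 256 * (n + 1) ^ 4 := by ring
  rw [show 4 * (n + 1) = 4 * n + 4 by ring, factorial_add_four, Nat.factorial_succ]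
  push_cast
  have hpos : (0 : ℝ) ≤ (4 * n)! * n ! ^ 4 := by positivity
  linear_combination mul_le_mul_of_nonneg_right hpoly hpos

theorem aCoeff_zero_left_add_mul_pow_le {r : ℝ} (hr : 0 ≤ r) (a k : ℕ) :
    aCoeff 0 (a + k) * r ^ (a + k) ≤ aCoeff 0 a * r ^ a * (256 * r) ^ k := by
  induction k with
  | zero => simp
  | succ k ih =>
    calc aCoeff 0 (a + k + 1) * r ^ (a + k + 1) ≤ 256 * aCoeff 0 (a + k) * r ^ (a + k) * r := by
          rw [pow_succ, ← mul_assoc]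
          gcongr
          exact aCoeff_zero_left_succ_le _
      _ = 256 * r * (aCoeff 0 (a + k) * r ^ (a + k)) := by ring
      _ ≤ 256 * r * (aCoeff 0 a * r ^ a * (256 * r) ^ k) := by gcongr
      _ = aCoeff 0 a * r ^ a * (256 * r) ^ (k + 1) := by ring

theorem sum_antidiagonal_aCoeff_mul_pow_le (n : ℕ) {x y : ℝ} (hx : 0 ≤ x) (hy : 0 ≤ y) :
    ∑ p ∈ antidiagonal n, aCoeff p.1 p.2 * x ^ p.1 * y ^ p.2 ≤ aCoeff 0 n * (x + y) ^ n := by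
  rw [Nat.sum_antidiagonal_eq_sum_range_succ_mk, add_pow, mul_sum]
  refine sum_le_sum fun k hk => ?_
  have hkn : k + (n - k) = n := Nat.add_sub_cancel' (Nat.lt_succ_iff.mp (mem_range.mp hk))
  calc aCoeff k (n - k) * x ^ k * y ^ (n - k)
      ≤ aCoeff 0 n * (n.choose k : ℝ) * x ^ k * y ^ (n - k) := by
        gcongr
        simpa only [hkn] using aCoeff_le k (n - k)
    _ = aCoeff 0 n * (x ^ k * y ^ (n - k) * n.choose k) := by ring

theorem summable_and_tsum_le_of_sum_antidiagonal_le {A : Type*} [AddCommMonoid A]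
    [HasAntidiagonal A] {g : A × A → ℝ} {b : A → ℝ} (hg : 0 ≤ g) (hb : Summable b)
    (hgb : ∀ n, ∑ p ∈ antidiagonal n, g p ≤ b n) :
    Summable g ∧ ∑' p, g p ≤ ∑' n, b n := by
  let e := HasAntidiagonal.sigmaAntidiagonalEquivProd (A := A)
  have hfiber (n : A) : Summable fun p : antidiagonal n => g p := (hasSum_fintype _).summable
  have hfiber_le (n : A) : ∑' p : antidiagonal n, g p ≤ b n :=
    (Finset.tsum_subtype (antidiagonal n) g).trans_le (hgb n)
  have hsum : Summable fun c => g (e c) :=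
    (summable_sigma_of_nonneg fun _ => hg _).2 ⟨hfiber,
      hb.of_nonneg_of_le (fun _ => tsum_nonneg fun _ => hg _) hfiber_le⟩
  refine ⟨e.summable_iff.mp hsum, ?_⟩
  rw [← e.tsum_eq, hsum.tsum_sigma' hfiber]
  exact hsum.sigma.tsum_le_tsum hfiber_le hb

theorem hasSum_ite_mul_geometric {q : ℝ} (hq₀ : 0 ≤ q) (hq₁ : q < 1) (C : ℝ) (M : ℕ) :
    HasSum (fun n => if M ≤ n then C * q ^ (n - M) else 0) (C * (1 - q)⁻¹) := by
  rw [← hasSum_nat_add_iff' M]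
  have hhead : ∑ n ∈ range M, (if M ≤ n then C * q ^ (n - M) else 0) = 0 :=
    sum_eq_zero fun n hn => if_neg (not_le.mpr (mem_range.mp hn))
  simpa [hhead] using (hasSum_geometric_of_lt_one hq₀ hq₁).mul_left C

noncomputable def tailTerm (N : ℕ) (lam mu : ℂ) (p : ℕ × ℕ) : ℂ :=
  if N + 1 ≤ p.1 + p.2 then (aCoeff p.1 p.2 : ℂ) * lam ^ p.1 * mu ^ p.2 else 0

theorem norm_tailTerm (N : ℕ) (lam mu : ℂ) (p : ℕ × ℕ) : ‖tailTerm N lam mu p‖ =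
    if N + 1 ≤ p.1 + p.2 then aCoeff p.1 p.2 * ‖lam‖ ^ p.1 * ‖mu‖ ^ p.2 else 0 := by
  unfold tailTerm
  split_ifs
  · simp [Complex.norm_real, abs_of_nonneg (by unfold aCoeff; positivity : 0 ≤ aCoeff p.1 p.2)]
  · exact norm_zero

theorem sum_antidiagonal_norm_tailTerm_le (N : ℕ) (lam mu : ℂ) (n : ℕ) :
    ∑ p ∈ antidiagonal n, ‖tailTerm N lam mu p‖ ≤ if N + 1 ≤ n then
      aCoeff 0 (N + 1) * (‖lam‖ + ‖mu‖) ^ (N + 1) * (256 * (‖lam‖ + ‖mu‖)) ^ (n - (N + 1))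
      else 0 := by
  split_ifs with hn
  · obtain ⟨k, rfl⟩ := Nat.exists_eq_add_of_le hn
    rw [sum_congr rfl fun p hp => by rw [norm_tailTerm, mem_antidiagonal.mp hp, if_pos hn],
      Nat.add_sub_cancel_left]
    exact (sum_antidiagonal_aCoeff_mul_pow_le _ (norm_nonneg lam) (norm_nonneg mu)).trans
      (aCoeff_zero_left_add_mul_pow_le (by positivity) _ _)
  · exact (sum_eq_zero fun p hp => by rw [norm_tailTerm, mem_antidiagonal.mp hp, if_neg hn]).le

theorem tail_bound_delta1 (N : ℕ) (lam mu : ℂ)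
    (h : 256 * (‖lam‖ + ‖mu‖) < 1) :
    Summable (fun p : ℕ × ℕ =>
      if N + 1 ≤ p.1 + p.2 then (aCoeff p.1 p.2 : ℂ) * lam ^ p.1 * mu ^ p.2 else 0) ∧
    Summable (fun p : ℕ × ℕ =>
      ‖(if N + 1 ≤ p.1 + p.2 then (aCoeff p.1 p.2 : ℂ) * lam ^ p.1 * mu ^ p.2 else 0)‖) ∧
    ‖(∑' p : ℕ × ℕ,
        if N + 1 ≤ p.1 + p.2 then (aCoeff p.1 p.2 : ℂ) * lam ^ p.1 * mu ^ p.2 else 0)‖ ≤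
      ((4 * (N + 1)).factorial : ℝ) / ((N + 1).factorial : ℝ) ^ 4 *
        (‖lam‖ + ‖mu‖) ^ (N + 1) /
        (1 - 256 * (‖lam‖ + ‖mu‖)) := by
  have hgeom := hasSum_ite_mul_geometric (by positivity) h
    (aCoeff 0 (N + 1) * (‖lam‖ + ‖mu‖) ^ (N + 1)) (N + 1)
  obtain ⟨hsum, htsum⟩ := summable_and_tsum_le_of_sum_antidiagonal_le
    (fun p => norm_nonneg (tailTerm N lam mu p)) hgeom.summable
    (sum_antidiagonal_norm_tailTerm_le N lam mu)
  refine ⟨hsum.of_norm, hsum, ?_⟩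
  calc ‖∑' p, tailTerm N lam mu p‖
      ≤ ∑' p, ‖tailTerm N lam mu p‖ := norm_tsum_le_tsum_norm hsum
    _ ≤ _ := htsum
    _ = _ := by rw [hgeom.tsum_eq, aCoeff_zero_left, div_eq_mul_inv _ (1 - _)]
end

section
/- For every natural number n ≥ 1 and every pair of natural numbers l, m with l + m = n, the inequality (n!)²·l! / ((2l)!·(n+m)!) ≤ (e³/(2√2·π))·(1/2^(2l))·n^(2n+1/2)/(l^l·(n+m)^(n+m)) holds, where powers with real exponents are interpreted via exp·log and 0^0 = 1. -/
/-!
Each factorial is replaced by an explicit Stirling bound: `√(2πk) (k/e)^k ≤ k!` for all `k`, and,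
since the Stirling sequence `k! / (√(2k) (k/e)^k)` decreases from its value `e/√2` at `k = 1`,
`k! ≤ e √k (k/e)^k` for `k ≥ 1`. The powers of `e` cancel because `2n + l = 2l + (n + m)`, and the
square roots leave the constant `e³/(2√2π)` times `n/√(n+m) ≤ √n`. For `l = 0` the upper bound
is not available for `0! = 1`; there the slack `n/√(2n) = √n/√2` pays instead, via `√(2π) ≤ e`.
-/

open Real Stirling
open scoped Nat

theorem factorial_le_exp_one_mul_sqrt_mul_pow {n : ℕ} (hn : n ≠ 0) :
    (n ! : ℝ) ≤ exp 1 * √n * (n / exp 1) ^ n := by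
  obtain ⟨k, rfl⟩ := Nat.exists_eq_succ_of_ne_zero hn
  have hseq : stirlingSeq (k + 1) ≤ exp 1 / √2 := by
    simpa [stirlingSeq_one] using stirlingSeq'_antitone (Nat.zero_le k)
  rw [stirlingSeq, div_le_iff₀ (by positivity)] at hseq
  calc _ ≤ _ := hseq
    _ = _ := by rw [sqrt_mul zero_le_two]; field_simp

theorem factorial_sq_div_factorial_add_le {l m n : ℕ} (h : l + m = n) (hn : n ≠ 0) :
    (n ! : ℝ) ^ 2 / (n + m)! ≤
      exp 1 ^ 2 / √(2 * π) * (n ^ (2 * n + 1) / (exp 1 ^ l * √(n + m) * (n + m) ^ (n + m))) := by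
  calc (n ! : ℝ) ^ 2 / (n + m)!
      ≤ (exp 1 * √n * (n / exp 1) ^ n) ^ 2 / (√(2 * π * (n + m)) * ((n + m) / exp 1) ^ (n + m)) := by
        gcongr
        · exact factorial_le_exp_one_mul_sqrt_mul_pow hn
        · exact_mod_cast le_factorial_stirling (n + m)
    _ = _ := by
      subst h
      rw [sqrt_mul (by positivity), div_pow, div_pow, mul_pow, mul_pow, sq_sqrt (Nat.cast_nonneg _)]
      field_simp
      ring

theorem factorial_div_factorial_two_mul_le {l : ℕ} (hl : l ≠ 0) :
    (l ! : ℝ) / (2 * l)! ≤ exp 1 / (2 * √π) * (exp 1 / (4 * l)) ^ l := by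
  calc (l ! : ℝ) / (2 * l)!
      ≤ (exp 1 * √l * (l / exp 1) ^ l) / (√(2 * π * (2 * l)) * ((2 * l) / exp 1) ^ (2 * l)) := by
        gcongr
        · exact factorial_le_exp_one_mul_sqrt_mul_pow hl
        · exact_mod_cast le_factorial_stirling (2 * l)
    _ = _ := by
      rw [show (2 * π * (2 * l) : ℝ) = 2 ^ 2 * π * l by ring, sqrt_mul (by positivity),
        sqrt_mul (by positivity), sqrt_sq zero_le_two, div_pow, div_pow, div_pow, mul_pow, mul_pow,
        show (4 : ℝ) ^ l = 2 ^ (2 * l) by rw [pow_mul]; norm_num]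
      field_simp
      ring

theorem sqrt_two_mul_pi_le_exp_one : √(2 * π) ≤ exp 1 := by
  rw [sqrt_le_left (exp_pos 1).le]
  nlinarith [pi_lt_d2, exp_one_gt_d9]

theorem factorial_sq_div_factorial_add_self_le {n : ℕ} (hn : n ≠ 0) :
    (n ! : ℝ) ^ 2 / (n + n)! ≤
      exp 1 ^ 3 / (2 * √2 * π) * (n ^ (2 * n) * √n / (n + n) ^ (n + n)) :=
  calc (n ! : ℝ) ^ 2 / (n + n)!
      ≤ exp 1 ^ 2 / √(2 * π) * (n ^ (2 * n + 1) / (exp 1 ^ 0 * √(n + n) * (n + n) ^ (n + n))) :=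
        factorial_sq_div_factorial_add_le (zero_add n) hn
    _ = √(2 * π) / exp 1 * (exp 1 ^ 3 / (2 * √2 * π) * (n ^ (2 * n) * √n / (n + n) ^ (n + n))) := by
        rw [sqrt_mul zero_le_two, ← two_mul, sqrt_mul zero_le_two]
        field_simp
        rw [sq_sqrt zero_le_two, sq_sqrt pi_pos.le, sq_sqrt n.cast_nonneg]
        ring
    _ ≤ _ := mul_le_of_le_one_left (by positivity)
        ((div_le_one (exp_pos 1)).2 sqrt_two_mul_pi_le_exp_one)

theorem div_sqrt_add_le_sqrt {x y : ℝ} (hx : 0 ≤ x) (hy : 0 ≤ y) : x / √(x + y) ≤ √x :=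
  div_le_of_le_mul₀ (sqrt_nonneg _) (sqrt_nonneg x) <|
    calc x = √x * √x := (mul_self_sqrt hx).symm
      _ ≤ √x * √(x + y) := by gcongr; exact le_add_of_nonneg_right hy

theorem stirling_summand_bound (n : ℕ) (hn : 1 ≤ n) (l m : ℕ) (h : l + m = n) :
    ((n.factorial : ℝ) ^ 2 * (l.factorial : ℝ)) /
        (((2 * l).factorial : ℝ) * ((n + m).factorial : ℝ)) ≤
      Real.exp 3 / (2 * Real.sqrt 2 * Real.pi) * (1 / (2 : ℝ) ^ (2 * l)) *
        ((n : ℝ) ^ (2 * (n : ℝ) + 1/2) / ((l : ℝ) ^ l * ((n : ℝ) + (m : ℝ)) ^ (n + m))) := by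
  have hn0 : n ≠ 0 := Nat.one_le_iff_ne_zero.1 hn
  have hrpow : (n : ℝ) ^ (2 * (n : ℝ) + 1 / 2) = (n : ℝ) ^ (2 * n) * √n := by
    rw [rpow_add (by positivity), sqrt_eq_rpow, ← Nat.cast_ofNat, ← Nat.cast_mul, rpow_natCast]
  rw [hrpow, mul_comm ((2 * l)! : ℝ), mul_div_mul_comm,
    show exp 3 = exp 1 ^ 3 by rw [exp_one_pow]; norm_num]
  obtain rfl | hl := eq_or_ne l 0
  · obtain rfl : n = m := by omega
    simpa using factorial_sq_div_factorial_add_self_le hn0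
  calc (n ! : ℝ) ^ 2 / (n + m)! * (l ! / (2 * l)!)
      ≤ (exp 1 ^ 2 / √(2 * π) * (n ^ (2 * n + 1) / (exp 1 ^ l * √(n + m) * (n + m) ^ (n + m)))) *
          (exp 1 / (2 * √π) * (exp 1 / (4 * l)) ^ l) :=
        mul_le_mul (factorial_sq_div_factorial_add_le h hn0) (factorial_div_factorial_two_mul_le hl)
          (by positivity) (by positivity)
    _ = exp 1 ^ 3 / (2 * √2 * π) * (1 / 2 ^ (2 * l)) *
          (n ^ (2 * n) * (n / √(n + m)) / (l ^ l * (n + m) ^ (n + m))) := by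
        rw [sqrt_mul zero_le_two, div_pow, mul_pow,
          show (4 : ℝ) ^ l = 2 ^ (2 * l) by rw [pow_mul]; norm_num]
        field_simp
        rw [sq_sqrt pi_pos.le]
        ring
    _ ≤ _ := by
        gcongr
        exact div_sqrt_add_le_sqrt n.cast_nonneg m.cast_nonneg
end
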